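/- arXiv:2502.10885 — 4 statements merged into one kernel-verified Lean document; each statement's English description precedes it below -/
import Mathlib

section
/- For all real numbers A > 0 and B > 0, the integral ∫₀^∞ exp(-A x² - B/x²) dx equals (1/2)·√(π/A)·exp(-2√(AB)). -/
/-! With `a = √A` and `b = √B` the exponent is `-(a x - b / x)² - 2ab`. The substitution
`u = a x - b / x` maps `(0, ∞)` increasingly onto `ℝ` with `du = (a + b / x²) dx`, while the
involution `x ↦ b / (a x)` of `(0, ∞)` flips the sign of `u` and turns `dx` into `b / (a x²) dx`.
For an even integrand the two weights therefore contribute equally, so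
`2a ∫₀^∞ exp (-(a x - b / x)²) dx = ∫ exp (-u²) du = √π`. -/

open MeasureTheory Real Set

section CauchySchlomilch

variable {E : Type*} [NormedAddCommGroup E] [NormedSpace ℝ E] {a b : ℝ}

theorem hasDerivAt_mul_sub_div (a b : ℝ) {x : ℝ} (hx : x ≠ 0) :
    HasDerivAt (fun x => a * x - b / x) (a + b / x ^ 2) x := by
  have h := ((hasDerivAt_id x).const_mul a).sub ((hasDerivAt_inv hx).const_mul b)
  simp only [div_eq_mul_inv]
  exact h.congr_deriv (by simp [sub_eq_add_neg])

theorem strictMonoOn_mul_sub_div (ha : 0 < a) (hb : 0 ≤ b) :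
    StrictMonoOn (fun x => a * x - b / x) (Ioi 0) := fun x hx y _ hxy => by
  have := mul_lt_mul_of_pos_left hxy ha
  have := div_le_div_of_nonneg_left hb hx hxy.le
  dsimp only
  linarith

-- The positive root of `a x² - u x - b = 0` is a preimage of `u`.
theorem image_mul_sub_div_Ioi (ha : 0 < a) (hb : 0 < b) :
    (fun x => a * x - b / x) '' Ioi 0 = univ := by
  refine eq_univ_of_forall fun u => ?_
  set s := √(u ^ 2 + 4 * a * b)
  have hs : s ^ 2 = u ^ 2 + 4 * a * b := sq_sqrt (by positivity)
  have hus : 0 < u + s := by nlinarith [sqrt_nonneg (u ^ 2 + 4 * a * b), sq_nonneg (s + u)]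
  refine ⟨(u + s) / (2 * a), div_pos hus (by positivity), ?_⟩
  field_simp
  nlinarith

theorem integral_comp_div_Ioi {c : ℝ} (hc : 0 < c) (f : ℝ → E) :
    ∫ x in Ioi 0, (c / x ^ 2) • f (c / x) = ∫ x in Ioi 0, f x := by
  have hderiv : ∀ x ∈ Ioi (0 : ℝ), HasDerivWithinAt (fun x => c / x) (-(c / x ^ 2)) (Ioi 0) x :=
    fun x hx => ((hasDerivAt_inv hx.out.ne').const_mul c).hasDerivWithinAt.congr_deriv (by ring)
  have hinj : InjOn (fun x => c / x) (Ioi 0) := fun x _ y _ hxy =>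
    inv_injective (mul_left_cancel₀ hc.ne' (by simpa only [div_eq_mul_inv] using hxy))
  have himage : (fun x => c / x) '' Ioi 0 = Ioi 0 := by
    refine Subset.antisymm (image_subset_iff.2 fun x hx => div_pos hc hx) fun x hx => ?_
    exact ⟨c / x, div_pos hc hx, div_div_cancel₀ hc.ne'⟩
  have := integral_image_eq_integral_abs_deriv_smul measurableSet_Ioi hderiv hinj f
  rw [himage] at this
  rw [this]
  refine setIntegral_congr_fun measurableSet_Ioi fun x hx => ?_
  simp only [abs_neg, abs_of_pos (div_pos hc (pow_pos hx.out 2))]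

theorem abs_add_div_sq {x : ℝ} (ha : 0 < a) (hb : 0 ≤ b) : |a + b / x ^ 2| = a + b / x ^ 2 :=
  abs_of_pos (by positivity)

theorem integrableOn_comp_mul_sub_div_Ioi_iff (ha : 0 < a) (hb : 0 < b) (g : ℝ → E) :
    IntegrableOn (fun x => (a + b / x ^ 2) • g (a * x - b / x)) (Ioi 0) ↔ Integrable g := by
  rw [← integrableOn_univ, ← image_mul_sub_div_Ioi ha hb,
    integrableOn_image_iff_integrableOn_abs_deriv_smul measurableSet_Ioi
      (fun x hx => (hasDerivAt_mul_sub_div a b hx.out.ne').hasDerivWithinAt)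
      (strictMonoOn_mul_sub_div ha hb.le).injOn]
  simp only [abs_add_div_sq ha hb.le]

theorem integral_comp_mul_sub_div_Ioi (ha : 0 < a) (hb : 0 < b) (g : ℝ → E) :
    ∫ x in Ioi 0, (a + b / x ^ 2) • g (a * x - b / x) = ∫ u, g u := by
  have := integral_image_eq_integral_abs_deriv_smul measurableSet_Ioi
    (fun x hx => (hasDerivAt_mul_sub_div a b hx.out.ne').hasDerivWithinAt)
    (strictMonoOn_mul_sub_div ha hb.le).injOn g
  rw [image_mul_sub_div_Ioi ha hb, setIntegral_univ] at this
  simp only [this, abs_add_div_sq ha hb.le]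

theorem integral_comp_mul_sub_div_Ioi_of_even (ha : 0 < a) (hb : 0 < b) {g : ℝ → E}
    (hg : g.Even) (hgi : Integrable g) :
    ∫ x in Ioi 0, g (a * x - b / x) = (2 * a)⁻¹ • ∫ u, g u := by
  let h : ℝ → E := fun x => g (a * x - b / x)
  have hw : IntegrableOn (fun x => (a + b / x ^ 2) • h x) (Ioi 0) :=
    (integrableOn_comp_mul_sub_div_Ioi_iff ha hb g).2 hgi
  have hW : ∫ x in Ioi 0, (a + b / x ^ 2) • h x = ∫ u, g u :=
    integral_comp_mul_sub_div_Ioi ha hb g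
  have hh : IntegrableOn h (Ioi 0) := by
    have : IntegrableOn (fun x => (a + b / x ^ 2)⁻¹ • (a + b / x ^ 2) • h x) (Ioi 0) := by
      refine hw.bdd_smul a⁻¹ (φ := fun x => (a + b / x ^ 2)⁻¹) ?_ ?_
      · exact (by fun_prop : Measurable fun x : ℝ => (a + b / x ^ 2)⁻¹).aestronglyMeasurable
      · refine ae_of_all _ fun x => ?_
        rw [norm_inv, Real.norm_of_nonneg (by positivity)]
        exact inv_anti₀ ha (le_add_of_nonneg_right (by positivity))
    exact this.congr_fun (fun x _ => inv_smul_smul₀ (by positivity) (h x)) measurableSet_Ioi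
  have hsymm : ∫ x in Ioi 0, (b / a / x ^ 2) • h x = ∫ x in Ioi 0, h x := by
    rw [← integral_comp_div_Ioi (div_pos hb ha) h]
    refine setIntegral_congr_fun measurableSet_Ioi fun x hx => ?_
    have : a * (b / a / x) - b / (b / a / x) = -(a * x - b / x) := by
      field_simp [hx.out.ne']
      ring
    simp only [h, this, hg _]
  have hsplit : ∫ x in Ioi 0, (b / a / x ^ 2) • h x
      = a⁻¹ • (∫ u, g u) - ∫ x in Ioi 0, h x := by
    rw [← hW, ← integral_smul,
      ← integral_sub (f := fun x => a⁻¹ • (a + b / x ^ 2) • h x) (hw.smul a⁻¹) hh]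
    refine setIntegral_congr_fun measurableSet_Ioi fun x hx => ?_
    match_scalars
    field_simp
    ring
  rw [hsplit, sub_eq_iff_eq_add, ← two_smul ℝ] at hsymm
  rw [mul_inv, mul_smul, hsymm, smul_smul, inv_mul_cancel₀ two_ne_zero, one_smul]

end CauchySchlomilch

theorem integral_exp_neg_sq : ∫ u : ℝ, exp (-u ^ 2) = √π := by
  simpa using integral_gaussian 1

theorem exp_neg_mul_sq_sub_div_sq {A B x : ℝ} (hA : 0 ≤ A) (hB : 0 ≤ B) (hx : x ≠ 0) :
    exp (-A * x ^ 2 - B / x ^ 2) = exp (-2 * √(A * B)) * exp (-(√A * x - √B / x) ^ 2) := by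
  rw [← exp_add, sqrt_mul hA]
  congr 1
  field_simp
  linear_combination x ^ 4 * sq_sqrt hA + sq_sqrt hB

theorem laplace_integral (A B : ℝ) (hA : 0 < A) (hB : 0 < B) :
    ∫ x in Set.Ioi (0:ℝ), Real.exp (-A * x ^ 2 - B / x ^ 2)
      = (1 / 2) * Real.sqrt (Real.pi / A) * Real.exp (-2 * Real.sqrt (A * B)) := by
  have hgauss : (fun u : ℝ => exp (-u ^ 2)).Even := fun u => by simp
  rw [setIntegral_congr_fun measurableSet_Ioi
      fun x hx => exp_neg_mul_sq_sub_div_sq hA.le hB.le hx.out.ne',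
    integral_const_mul, integral_comp_mul_sub_div_Ioi_of_even (sqrt_pos.2 hA) (sqrt_pos.2 hB)
      hgauss (by simpa using integrable_exp_neg_mul_sq one_pos), integral_exp_neg_sq,
    sqrt_div' _ hA.le, smul_eq_mul]
  field_simp
end

section
/- Let λ > 0, let W be a random variable with density f_W(w) = λ w^{λ-1} on (0,1) (Beta(1,λ) distribution), let Z be a standard normal random variable independent of W, and set X = √W · Z. Then the density of X is f_X(x) = (λ/√π) · 2^{-λ} · (x²)^{λ - 1/2} · Γ(1/2 - λ, x²/2) for x ∈ ℝ, where Γ(p, y) = ∫_y^∞ u^{p-1} e^{-u} du is the upper incomplete Gamma function. -/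
open MeasureTheory Real Set ProbabilityTheory
open scoped ENNReal NNReal

/-!
Conditionally on `W = w`, `√W · Z` is `N(0, w)`, so the law of `X` is the variance mixture with
density `x ↦ ∫₀¹ λ w^(λ-1) (2πw)^(-1/2) e^(-x²/(2w)) dw`. For `x ≠ 0` the substitution
`u = x²/(2w)` maps `(0, 1)` onto `(x²/2, ∞)` and turns this integral into
`λ π^(-1/2) 2^(-λ) (x²)^(λ-1/2) Γ(1/2 - λ, x²/2)`; the point `x = 0` is Lebesgue-null.
-/

/-- Upper incomplete Gamma function `Γ(p, x) = ∫_x^∞ u^(p-1) e^(-u) du`. -/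
noncomputable def uGamma (p x : ℝ) : ℝ := ∫ u in Set.Ioi x, u ^ (p - 1) * Real.exp (-u)

lemma integrableOn_rpow_mul_exp_neg_Ioi (p : ℝ) {y : ℝ} (hy : 0 < y) :
    IntegrableOn (fun u => u ^ (p - 1) * exp (-u)) (Ioi y) := by
  rcases lt_or_ge 0 p with hp | hp
  · simpa only [mul_comm] using (GammaIntegral_convergent hp).mono_set (Ioi_subset_Ioi hy.le)
  · refine ((exp_neg_integrableOn_Ioi y one_pos).const_mul (y ^ (p - 1))).mono' ?_ ?_
    · fun_prop
    · filter_upwards [ae_restrict_mem measurableSet_Ioi] with u hu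
      have hu0 : 0 < u := hy.trans hu
      rw [norm_of_nonneg (by positivity), neg_one_mul]
      exact mul_le_mul_of_nonneg_right (rpow_le_rpow_of_nonpos hy hu.le (by linarith))
        (exp_pos _).le

lemma ofReal_uGamma (p : ℝ) {y : ℝ} (hy : 0 < y) :
    ENNReal.ofReal (uGamma p y) = ∫⁻ u in Ioi y, ENNReal.ofReal (u ^ (p - 1) * exp (-u)) := by
  refine ofReal_integral_eq_lintegral_ofReal (integrableOn_rpow_mul_exp_neg_Ioi p hy) ?_
  filter_upwards [ae_restrict_mem measurableSet_Ioi] with u hu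
  have : 0 < u := hy.trans hu
  positivity

lemma lintegral_Ioi_eq_lintegral_Ioo_div {c : ℝ} (hc : 0 < c) (g : ℝ → ℝ≥0∞) :
    ∫⁻ u in Ioi c, g u = ∫⁻ w in Ioo 0 1, ENNReal.ofReal (c / w ^ 2) * g (c / w) := by
  have himage : (c / ·) '' Ioo 0 1 = Ioi c := by
    ext u
    constructor
    · rintro ⟨w, ⟨hw0, hw1⟩, rfl⟩
      exact (lt_div_iff₀ hw0).2 (by nlinarith)
    · intro hu
      have hu0 : 0 < u := hc.trans hu
      exact ⟨c / u, ⟨by positivity, (div_lt_one hu0).2 hu⟩, div_div_cancel₀ hc.ne'⟩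
  rw [← himage, lintegral_image_eq_lintegral_abs_deriv_mul measurableSet_Ioo
    (f' := fun w => -(c / w ^ 2))]
  · refine setLIntegral_congr_fun measurableSet_Ioo fun w ⟨hw0, _⟩ => ?_
    rw [abs_neg, abs_of_pos (by positivity)]
  · intro w hw
    have := ((hasDerivAt_inv hw.1.ne').const_mul c).hasDerivWithinAt (s := Ioo 0 1)
    simpa only [← div_eq_mul_inv, mul_neg] using this
  · intro a _ b _ h
    exact inv_injective (mul_left_cancel₀ hc.ne' (by simpa only [div_eq_mul_inv] using h))

/-- The right-hand side is the Gamma integrand at `u = x² / (2w)` times the Jacobian `x² / (2w²)`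
of that substitution. -/
lemma mul_gaussianPDFReal_eq (lam : ℝ) {x w : ℝ} (hx : x ≠ 0) (hw : 0 < w) :
    lam * w ^ (lam - 1) * gaussianPDFReal 0 w.toNNReal x
      = lam / √π * 2 ^ (-lam) * (x ^ 2) ^ (lam - 1 / 2) *
        (x ^ 2 / 2 / w ^ 2 * ((x ^ 2 / 2 / w) ^ (1 / 2 - lam - 1) * exp (-(x ^ 2 / 2 / w)))) := by
  set c := x ^ 2 / 2 with hc_def
  have hc : 0 < c := by positivity
  set a := lam - 1 / 2 with ha
  have hw_pow : w ^ (lam - 1) = w ^ a / √w := by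
    rw [sqrt_eq_rpow, ← rpow_sub hw, ha]; ring_nf
  have hx_pow : (x ^ 2) ^ a = 2 ^ a * c ^ a := by
    rw [show x ^ 2 = 2 * c by rw [hc_def]; ring, mul_rpow two_pos.le hc.le]
  have htwo_pow : (2 : ℝ) ^ (-lam) = (2 ^ a)⁻¹ / √2 := by
    rw [sqrt_eq_rpow, ← rpow_neg two_pos.le, ← rpow_sub two_pos, ha]; ring_nf
  have hcw_pow : (c / w) ^ (1 / 2 - lam - 1) = w ^ a / c ^ a * (w / c) := by
    rw [show 1 / 2 - lam - 1 = -a - 1 by ring, rpow_sub_one (by positivity),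
      rpow_neg (by positivity), div_rpow hc.le hw.le]
    field_simp
  have hsqrt : √(2 * π * w) = √2 * √π * √w := by
    rw [sqrt_mul (by positivity), sqrt_mul two_pos.le]
  have hexp : -(x - 0) ^ 2 / (2 * w) = -(c / w) := by rw [hc_def]; ring
  rw [gaussianPDFReal, Real.coe_toNNReal _ hw.le, hsqrt, hexp, hw_pow, hx_pow, htwo_pow, hcw_pow]
  field_simp
  rw [sq_sqrt hw.le]

lemma lintegral_Ioo_rpow_mul_gaussianPDF {lam : ℝ} (hlam : 0 ≤ lam) {x : ℝ} (hx : x ≠ 0) :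
    ∫⁻ w in Ioo 0 1, ENNReal.ofReal (lam * w ^ (lam - 1)) * gaussianPDF 0 w.toNNReal x
      = ENNReal.ofReal (lam / √π * 2 ^ (-lam) * (x ^ 2) ^ (lam - 1 / 2) *
          uGamma (1 / 2 - lam) (x ^ 2 / 2)) := by
  have hc : 0 < x ^ 2 / 2 := by positivity
  rw [ENNReal.ofReal_mul (by positivity), ofReal_uGamma _ hc,
    lintegral_Ioi_eq_lintegral_Ioo_div hc, ← lintegral_const_mul' _ _ ENNReal.ofReal_ne_top]
  refine setLIntegral_congr_fun measurableSet_Ioo fun w ⟨hw0, _⟩ => ?_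
  rw [gaussianPDF, ← ENNReal.ofReal_mul (by positivity), ← ENNReal.ofReal_mul (by positivity),
    ← ENNReal.ofReal_mul (by positivity), mul_gaussianPDFReal_eq lam hx hw0]

lemma gaussianReal_map_sqrt_mul {w : ℝ} (hw : 0 ≤ w) :
    (gaussianReal 0 1).map (√w * ·) = gaussianReal 0 w.toNNReal := by
  rw [gaussianReal_map_const_mul, mul_zero, mul_one]
  congr
  simp [sq_sqrt hw, hw]

theorem map_sqrt_mul_prod_gaussianReal {μ : Measure ℝ} [SFinite μ] (hμ : ∀ᵐ w ∂μ, 0 < w) :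
    (μ.prod (gaussianReal 0 1)).map (fun p => √p.1 * p.2)
      = volume.withDensity fun x => ∫⁻ w, gaussianPDF 0 w.toNNReal x ∂μ := by
  have hpdf : Measurable (Function.uncurry fun (w x : ℝ) => gaussianPDF 0 w.toNNReal x) := by
    unfold gaussianPDF; fun_prop
  ext s hs
  rw [Measure.map_apply (by fun_prop) hs, Measure.prod_apply (by measurability),
    withDensity_apply _ hs, ← lintegral_lintegral_swap hpdf.aemeasurable]
  refine lintegral_congr_ae ?_
  filter_upwards [hμ] with w hw
  rw [← gaussianReal_apply 0 (by simpa using hw) s, ← gaussianReal_map_sqrt_mul hw.le,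
    Measure.map_apply (by fun_prop) hs]
  rfl

lemma lintegral_withDensity_ofReal_ite {s : Set ℝ} [DecidablePred (· ∈ s)]
    (hs : MeasurableSet s) {f : ℝ → ℝ} (hf : Measurable f) {g : ℝ → ℝ≥0∞} (hg : Measurable g) :
    ∫⁻ w, g w ∂volume.withDensity (fun w => ENNReal.ofReal (if w ∈ s then f w else 0))
      = ∫⁻ w in s, ENNReal.ofReal (f w) * g w := by
  have hind : (fun w => ENNReal.ofReal (if w ∈ s then f w else 0))
      = s.indicator fun w => ENNReal.ofReal (f w) := by
    ext w; by_cases hw : w ∈ s <;> simp [hw]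
  rw [hind, lintegral_withDensity_eq_lintegral_mul _ (hf.ennreal_ofReal.indicator hs) hg,
    ← lintegral_indicator hs]
  simp only [Pi.mul_apply, indicator_mul_left]

lemma ae_withDensity_ofReal_ite_mem {s : Set ℝ} [DecidablePred (· ∈ s)] (hs : MeasurableSet s)
    {f : ℝ → ℝ} (hf : Measurable f) :
    ∀ᵐ w ∂volume.withDensity (fun w => ENNReal.ofReal (if w ∈ s then f w else 0)), w ∈ s := by
  refine (ae_withDensity_iff (Measurable.ite hs hf measurable_const).ennreal_ofReal).2 <|
    ae_of_all _ fun w hw => ?_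
  by_contra hws
  exact hw (by simp [show ¬s w from hws])

theorem density_sqrtW_mul_Z
    {Ω : Type*} [MeasureSpace Ω] [IsProbabilityMeasure (ℙ : Measure Ω)]
    (lam : ℝ) (hlam : 0 < lam) (W Z : Ω → ℝ)
    (hWm : Measurable W) (hZm : Measurable Z)
    (hW : Measure.map W ℙ
      = volume.withDensity fun w =>
          ENNReal.ofReal (if w ∈ Set.Ioo (0:ℝ) 1 then lam * w ^ (lam - 1) else 0))
    (hZ : Measure.map Z ℙ = ProbabilityTheory.gaussianReal 0 1)
    (hindep : ProbabilityTheory.IndepFun W Z ℙ) :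
    Measure.map (fun ω => Real.sqrt (W ω) * Z ω) ℙ
      = volume.withDensity fun x =>
          ENNReal.ofReal
            (lam / Real.sqrt Real.pi * 2 ^ (-lam) * (x ^ 2) ^ (lam - 1 / 2) *
              uGamma (1 / 2 - lam) (x ^ 2 / 2)) := by
  have hdensity : Measurable fun w : ℝ => lam * w ^ (lam - 1) := by fun_prop
  have hlaw : Measure.map (fun ω => (W ω, Z ω)) ℙ = (Measure.map W ℙ).prod (Measure.map Z ℙ) :=
    (indepFun_iff_map_prod_eq_prod_map_map hWm.aemeasurable hZm.aemeasurable).1 hindep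
  have hW_pos : ∀ᵐ w ∂Measure.map W ℙ, 0 < w := by
    rw [hW]
    exact (ae_withDensity_ofReal_ite_mem measurableSet_Ioo hdensity).mono fun w hw => hw.1
  rw [show (fun ω => √(W ω) * Z ω) = (fun p : ℝ × ℝ => √p.1 * p.2) ∘ fun ω => (W ω, Z ω) from rfl,
    ← Measure.map_map (by fun_prop) (hWm.prodMk hZm), hlaw, hZ,
    map_sqrt_mul_prod_gaussianReal hW_pos, hW]
  refine withDensity_congr_ae ?_
  filter_upwards [Measure.ae_ne volume 0] with x hx
  rw [lintegral_withDensity_ofReal_ite measurableSet_Ioo hdensity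
    (by unfold gaussianPDF; fun_prop), lintegral_Ioo_rpow_mul_gaussianPDF hlam.le hx]
end

section
/- For every positive integer n and b > 0, lim_{s→n} [csc(π s) H_{1/2 - s}(2√b) + 2 csc(2π s) J_{s - 1/2}(2√b)] = (1/π)·[J'_{n-1/2}(2√b) − (−1)^n H'_{1/2 − n}(2√b)], where the derivatives of the Bessel function J and the Struve function H are with respect to the order, and the limit is along s ∉ ℤ ∪ (1/2 + ℤ). -/
open MeasureTheory Real Set Filter

/-- Bessel function of the first kind of order `α`. -/
noncomputable def besselJ (α z : ℝ) : ℝ :=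
  ∑' n : ℕ, (-1) ^ n / ((n.factorial : ℝ) * Real.Gamma ((n : ℝ) + α + 1)) *
    (z / 2) ^ (2 * (n : ℝ) + α)

/-- Struve function of order `α`. -/
noncomputable def struveH (α z : ℝ) : ℝ :=
  ∑' n : ℕ, (-1) ^ n / (Real.Gamma ((n : ℝ) + 3 / 2) * Real.Gamma ((n : ℝ) + α + 3 / 2)) *
    (z / 2) ^ (2 * (n : ℝ) + α + 1)

/-!
The order enters both series only through `(z/2)^α` and `1/Γ(α + c + k)`. Extending the order to
`ℂ`, `1/Γ` is entire and, by `Γ(s + 1) = s Γ(s)`, `1/Γ(w + k)` is bounded uniformly in `k` for `w`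
in a compact set, so the series converge locally uniformly and are differentiable in the order.

At `s = n` the Struve function of order `1/2 - n` equals `-(-1)^n J_{n-1/2}`: its first `n` terms
vanish because `1/Γ` vanishes at the non-positive integers, and the rest is the Bessel series.
Writing the expression as `(cos(πs) H_{1/2-s} + J_{s-1/2}) / (sin(2πs)/2)`, numerator and
denominator both vanish at `n`, so the limit is the quotient of their derivatives.
-/

open scoped Nat Topology

namespace Complex

theorem norm_inv_Gamma_add_nat_le {s : ℂ} (hs : 1 ≤ s.re) (j : ℕ) :
    ‖(Gamma (s + j))⁻¹‖ ≤ ‖(Gamma s)⁻¹‖ / j ! := by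
  induction j with
  | zero => simp
  | succ j ih =>
    have hre : (j : ℝ) + 1 ≤ ‖s + j‖ :=
      calc (j : ℝ) + 1 ≤ (s + j).re := by simp; linarith
        _ ≤ ‖s + j‖ := re_le_norm _
    have hsj : s + j ≠ 0 := norm_pos_iff.mp (by linarith)
    calc ‖(Gamma (s + (j + 1 : ℕ)))⁻¹‖ = ‖(Gamma (s + j))⁻¹‖ / ‖s + j‖ := by
          rw [Nat.cast_succ, ← add_assoc, Gamma_add_one _ hsj, mul_inv, norm_mul, norm_inv,
            div_eq_inv_mul]
      _ ≤ (‖(Gamma s)⁻¹‖ / j !) / ((j : ℝ) + 1) := by gcongr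
      _ = ‖(Gamma s)⁻¹‖ / (j + 1) ! := by
          rw [div_div, Nat.factorial_succ, Nat.cast_mul, mul_comm]; push_cast; ring

theorem exists_norm_inv_Gamma_add_nat_le {S : Set ℂ} (hS : IsCompact S) :
    ∃ C, ∀ w ∈ S, ∀ k : ℕ, ‖(Gamma (w + k))⁻¹‖ ≤ C := by
  obtain ⟨R, hR⟩ := hS.isBounded.exists_norm_le
  set K := ⌈R⌉₊ + 1
  have hT : IsCompact (⋃ k ∈ Finset.range (K + 1), (· + (k : ℂ)) '' S) :=
    (Finset.range (K + 1)).isCompact_biUnion fun k _ => hS.image (continuous_add_const _)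
  obtain ⟨C, hC⟩ :=
    hT.exists_bound_of_continuousOn differentiable_one_div_Gamma.continuous.continuousOn
  have hle_K : ∀ w ∈ S, ∀ k ≤ K, ‖(Gamma (w + k))⁻¹‖ ≤ C := fun w hw k hk =>
    hC _ (Set.mem_biUnion (Finset.mem_range.mpr (Nat.lt_succ_of_le hk)) ⟨w, hw, rfl⟩)
  refine ⟨C, fun w hw k => ?_⟩
  rcases le_or_gt k K with hk | hk
  · exact hle_K w hw k hk
  have hre : 1 ≤ (w + K).re := by
    have hw' := abs_le.mp ((abs_re_le_norm w).trans (hR w hw))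
    simp only [K, add_re, natCast_re]
    push_cast
    linarith [Nat.le_ceil R]
  calc ‖(Gamma (w + k))⁻¹‖ = ‖(Gamma (w + K + (k - K : ℕ)))⁻¹‖ := by
        rw [Nat.cast_sub hk.le, add_assoc, add_sub_cancel]
    _ ≤ ‖(Gamma (w + K))⁻¹‖ / (k - K)! := norm_inv_Gamma_add_nat_le hre _
    _ ≤ ‖(Gamma (w + K))⁻¹‖ :=
        div_le_self (norm_nonneg _) (by exact_mod_cast (k - K).factorial_pos)
    _ ≤ C := hle_K w hw K le_rfl

theorem differentiable_tsum_mul_inv_Gamma_add_nat {a : ℕ → ℂ} (ha : Summable (‖a ·‖)) :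
    Differentiable ℂ fun w => ∑' k, a k * (Gamma (w + k))⁻¹ := by
  intro w₀
  obtain ⟨C, hC⟩ := exists_norm_inv_Gamma_add_nat_le (isCompact_closedBall w₀ 1)
  have hD : DifferentiableOn ℂ (fun w => ∑' k, a k * (Gamma (w + k))⁻¹) (Metric.ball w₀ 1) :=
    differentiableOn_tsum_of_summable_norm (ha.mul_right C)
      (fun k => ((differentiable_one_div_Gamma.comp (differentiable_id.add_const _)).const_mul
        (a k)).differentiableOn) Metric.isOpen_ball
      fun k w hw => by
        rw [norm_mul]
        exact mul_le_mul_of_nonneg_left (hC w (Metric.ball_subset_closedBall hw) k) (norm_nonneg _)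
  exact hD.differentiableAt (Metric.isOpen_ball.mem_nhds (Metric.mem_ball_self one_pos))

theorem differentiable_cpow_mul_tsum_mul_inv_Gamma {c : ℝ} (hc : 0 < c) (t : ℂ) {a : ℕ → ℝ}
    (ha : Summable fun k => |a k|) :
    Differentiable ℂ fun w : ℂ => (c : ℂ) ^ w * ∑' k, (a k : ℂ) * (Gamma (w + t + k))⁻¹ :=
  (differentiable_id.const_cpow (.inl (ofReal_ne_zero.mpr hc.ne'))).mul
    ((differentiable_tsum_mul_inv_Gamma_add_nat (by simpa using ha)).comp
      (differentiable_id.add_const t))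

end Complex

theorem differentiable_of_ofReal_eq {f : ℝ → ℝ} {F : ℂ → ℂ} (hF : Differentiable ℂ F)
    (hfF : ∀ x : ℝ, (f x : ℂ) = F x) : Differentiable ℝ f := fun x => by
  have h := (hF x).hasDerivAt.real_of_complex
  simp only [← hfF, Complex.ofReal_re] at h
  exact h.differentiableAt

noncomputable def besselCoeff (z : ℝ) (k : ℕ) : ℝ := (-1) ^ k * (z / 2) ^ (2 * k) / k !

noncomputable def struveCoeff (z : ℝ) (k : ℕ) : ℝ :=
  (-1) ^ k * (z / 2) ^ (2 * k + 1) / Real.Gamma (k + 3 / 2)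

theorem besselJ_term_eq {z : ℝ} (hz : 0 < z) (α : ℝ) (k : ℕ) :
    (-1) ^ k / ((k ! : ℝ) * Real.Gamma (k + α + 1)) * (z / 2) ^ (2 * (k : ℝ) + α) =
      (z / 2) ^ α * (besselCoeff z k * (Real.Gamma (α + 1 + k))⁻¹) := by
  rw [besselCoeff, Real.rpow_add (by positivity),
    show 2 * (k : ℝ) = ((2 * k : ℕ) : ℝ) by push_cast; rfl, Real.rpow_natCast,
    show (k : ℝ) + α + 1 = α + 1 + k by ring]
  ring

theorem struveH_term_eq {z : ℝ} (hz : 0 < z) (α : ℝ) (k : ℕ) :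
    (-1) ^ k / (Real.Gamma (k + 3 / 2) * Real.Gamma (k + α + 3 / 2)) *
        (z / 2) ^ (2 * (k : ℝ) + α + 1) =
      (z / 2) ^ α * (struveCoeff z k * (Real.Gamma (α + 3 / 2 + k))⁻¹) := by
  rw [struveCoeff, show 2 * (k : ℝ) + α + 1 = ((2 * k + 1 : ℕ) : ℝ) + α by push_cast; ring,
    Real.rpow_add (by positivity), Real.rpow_natCast,
    show (k : ℝ) + α + 3 / 2 = α + 3 / 2 + k by ring]
  ring

theorem ofReal_besselJ {z : ℝ} (hz : 0 < z) (α : ℝ) :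
    (besselJ α z : ℂ) = ((z / 2 : ℝ) : ℂ) ^ (α : ℂ) *
      ∑' k, (besselCoeff z k : ℂ) * (Complex.Gamma (α + 1 + k))⁻¹ := by
  simp_rw [besselJ, besselJ_term_eq hz, Complex.ofReal_tsum, ← tsum_mul_left, Complex.ofReal_mul,
    Complex.ofReal_cpow (half_pos hz).le, Complex.ofReal_inv, ← Complex.Gamma_ofReal]
  push_cast
  rfl

theorem ofReal_struveH {z : ℝ} (hz : 0 < z) (α : ℝ) :
    (struveH α z : ℂ) = ((z / 2 : ℝ) : ℂ) ^ (α : ℂ) *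
      ∑' k, (struveCoeff z k : ℂ) * (Complex.Gamma (α + 3 / 2 + k))⁻¹ := by
  simp_rw [struveH, struveH_term_eq hz, Complex.ofReal_tsum, ← tsum_mul_left, Complex.ofReal_mul,
    Complex.ofReal_cpow (half_pos hz).le, Complex.ofReal_inv, ← Complex.Gamma_ofReal]
  push_cast
  rfl

theorem summable_abs_besselCoeff (z : ℝ) : Summable fun k => |besselCoeff z k| :=
  (Real.summable_pow_div_factorial ((z / 2) ^ 2)).congr fun k => by
    simp [besselCoeff, abs_div, abs_mul, pow_mul, div_pow, sq_abs]

theorem summable_abs_struveCoeff (z : ℝ) : Summable fun k => |struveCoeff z k| := by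
  have hΓ (k : ℕ) : |(Real.Gamma (k + 3 / 2))⁻¹| ≤ |(Real.Gamma (3 / 2))⁻¹| / k ! := by
    have h := Complex.norm_inv_Gamma_add_nat_le (s := (3 / 2 : ℝ)) (by norm_num) k
    rwa [← Complex.ofReal_natCast, ← Complex.ofReal_add, Complex.Gamma_ofReal, Complex.Gamma_ofReal,
      ← Complex.ofReal_inv, ← Complex.ofReal_inv, Complex.norm_real, Complex.norm_real,
      Real.norm_eq_abs, Real.norm_eq_abs, add_comm] at h
  refine .of_nonneg_of_le (fun _ => abs_nonneg _) (fun k => ?_)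
    ((Real.summable_pow_div_factorial ((z / 2) ^ 2)).mul_left (|z / 2| * |(Real.Gamma (3 / 2))⁻¹|))
  calc |struveCoeff z k| = |z / 2| * (|z / 2| ^ 2) ^ k * |(Real.Gamma (k + 3 / 2))⁻¹| := by
        rw [struveCoeff, div_eq_mul_inv, abs_mul, abs_mul, abs_pow, abs_neg, abs_one, one_pow,
          one_mul, abs_pow, pow_succ, pow_mul]
        ring
    _ ≤ |z / 2| * (|z / 2| ^ 2) ^ k * (|(Real.Gamma (3 / 2))⁻¹| / k !) := by gcongr; exact hΓ k
    _ = _ := by rw [sq_abs]; ring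

theorem differentiable_besselJ {z : ℝ} (hz : 0 < z) : Differentiable ℝ fun α => besselJ α z :=
  differentiable_of_ofReal_eq
    (Complex.differentiable_cpow_mul_tsum_mul_inv_Gamma (half_pos hz) 1
      (summable_abs_besselCoeff z))
    (ofReal_besselJ hz)

theorem differentiable_struveH {z : ℝ} (hz : 0 < z) : Differentiable ℝ fun α => struveH α z :=
  differentiable_of_ofReal_eq
    (Complex.differentiable_cpow_mul_tsum_mul_inv_Gamma (half_pos hz) (3 / 2)
      (summable_abs_struveCoeff z))
    (ofReal_struveH hz)

theorem struveH_half_sub_natCast {n : ℕ} (hn : n ≠ 0) (z : ℝ) :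
    struveH (1 / 2 - n) z = -(-1) ^ n * besselJ (n - 1 / 2) z := by
  obtain ⟨m, rfl⟩ := Nat.exists_eq_succ_of_ne_zero hn
  have hsupp : Function.support (fun k : ℕ => (-1) ^ k / (Real.Gamma (k + 3 / 2) *
      Real.Gamma (k + (1 / 2 - (m + 1 : ℕ)) + 3 / 2)) *
        (z / 2) ^ (2 * (k : ℝ) + (1 / 2 - (m + 1 : ℕ)) + 1)) ⊆ Set.range (· + m) := by
    intro k hk
    refine ⟨k - m, Nat.sub_add_cancel (not_lt.mp fun hkm => hk ?_)⟩
    beta_reduce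
    rw [show (k : ℝ) + (1 / 2 - (m + 1 : ℕ)) + 3 / 2 = -(m - (k + 1) : ℕ) by
      rw [Nat.cast_sub hkm]; push_cast; ring,
      Real.Gamma_neg_nat_eq_zero, mul_zero, div_zero, zero_mul]
  rw [struveH, ← (add_left_injective m).tsum_eq hsupp, besselJ, ← tsum_mul_left]
  refine tsum_congr fun j => ?_
  rw [show ((j + m : ℕ) : ℝ) + (1 / 2 - (m + 1 : ℕ)) + 3 / 2 = (j : ℕ) + 1 by push_cast; ring,
    Real.Gamma_nat_eq_factorial,
    show ((j + m : ℕ) : ℝ) + 3 / 2 = j + ((m + 1 : ℕ) - 1 / 2) + 1 by push_cast; ring,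
    show 2 * ((j + m : ℕ) : ℝ) + (1 / 2 - (m + 1 : ℕ)) + 1 = 2 * j + ((m + 1 : ℕ) - 1 / 2) by
      push_cast; ring,
    pow_add, pow_succ]
  ring

theorem HasDerivAt.tendsto_div_of_eq_zero {𝕜 : Type*} [NontriviallyNormedField 𝕜]
    {f g : 𝕜 → 𝕜} {f' g' x : 𝕜} (hf : HasDerivAt f f' x) (hg : HasDerivAt g g' x)
    (hf0 : f x = 0) (hg0 : g x = 0) (hg' : g' ≠ 0) :
    Tendsto (fun s => f s / g s) (𝓝[≠] x) (𝓝 (f' / g')) := by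
  refine ((hasDerivAt_iff_tendsto_slope.mp hf).div (hasDerivAt_iff_tendsto_slope.mp hg) hg').congr'
    (eventually_nhdsWithin_of_forall fun s hs => ?_)
  rw [Pi.div_apply, slope_def_field, slope_def_field, hf0, hg0, sub_zero, sub_zero,
    div_div_div_cancel_right₀ (sub_ne_zero.mpr hs)]

theorem Real.sin_pi_mul_ne_zero {s : ℝ} (hs : ∀ k : ℤ, s ≠ k) : sin (π * s) ≠ 0 :=
  sin_ne_zero_iff.mpr fun k hk => hs k (mul_left_cancel₀ pi_ne_zero (by rw [← hk, mul_comm])).symm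

theorem Real.cos_pi_mul_ne_zero {s : ℝ} (hs : ∀ k : ℤ, s ≠ 1 / 2 + k) : cos (π * s) ≠ 0 :=
  cos_ne_zero_iff.mpr fun k hk => hs k (mul_left_cancel₀ pi_ne_zero (by rw [hk]; ring))

theorem Real.one_div_sin_mul_add_two_mul_one_div_sin_two_mul {x : ℝ} (hs : sin x ≠ 0)
    (hc : cos x ≠ 0) (h j : ℝ) :
    1 / sin x * h + 2 * (1 / sin (2 * x)) * j = (cos x * h + j) / (sin (2 * x) / 2) := by
  rw [sin_two_mul]
  field_simp

theorem Real.hasDerivAt_cos_pi_mul_natCast (n : ℕ) : HasDerivAt (fun s => cos (π * s)) 0 n := by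
  simpa [mul_comm π, sin_nat_mul_pi] using ((hasDerivAt_id (n : ℝ)).const_mul π).cos

theorem Real.hasDerivAt_sin_two_mul_pi_mul_div_two (n : ℕ) :
    HasDerivAt (fun s => sin (2 * (π * s)) / 2) π n := by
  refine ((((hasDerivAt_id (n : ℝ)).const_mul π).const_mul 2).sin.div_const 2).congr_deriv ?_
  rw [show 2 * (π * id (n : ℝ)) = n * (2 * π) by simp; ring, cos_nat_mul_two_pi]
  ring

theorem tendsto_csc_struve_bessel (n : ℕ) (hn : 1 ≤ n) (b : ℝ) (hb : 0 < b) :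
    Filter.Tendsto
      (fun s : ℝ =>
        (1 / Real.sin (Real.pi * s)) * struveH (1 / 2 - s) (2 * Real.sqrt b)
          + 2 * (1 / Real.sin (2 * Real.pi * s)) * besselJ (s - 1 / 2) (2 * Real.sqrt b))
      (nhdsWithin (n : ℝ)
        {s : ℝ | (∀ k : ℤ, s ≠ (k : ℝ)) ∧ (∀ k : ℤ, s ≠ 1 / 2 + (k : ℝ))})
      (nhds ((1 / Real.pi) *
        (deriv (fun α => besselJ α (2 * Real.sqrt b)) ((n : ℝ) - 1 / 2)
          - (-1 : ℝ) ^ n * deriv (fun α => struveH α (2 * Real.sqrt b)) (1 / 2 - (n : ℝ))))) := by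
  set z := 2 * √b
  have hz : 0 < z := mul_pos two_pos (sqrt_pos.mpr hb)
  have hJ := ((differentiable_besselJ hz _).hasDerivAt).comp_sub_const (n : ℝ) (1 / 2)
  have hH := ((differentiable_struveH hz _).hasDerivAt).comp_const_sub (1 / 2) (n : ℝ)
  have hnum : HasDerivAt (fun s => cos (π * s) * struveH (1 / 2 - s) z + besselJ (s - 1 / 2) z)
      (deriv (fun α => besselJ α z) (n - 1 / 2)
        - (-1) ^ n * deriv (fun α => struveH α z) (1 / 2 - n)) n := by
    refine (((hasDerivAt_cos_pi_mul_natCast n).mul hH).add hJ).congr_deriv ?_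
    rw [mul_comm π, cos_nat_mul_pi]
    ring
  have hnum0 : cos (π * n) * struveH (1 / 2 - n) z + besselJ (n - 1 / 2) z = 0 := by
    rw [struveH_half_sub_natCast (by omega), mul_comm π, cos_nat_mul_pi, ← mul_assoc, mul_neg,
      ← pow_add, ← two_mul, pow_mul, neg_one_sq, one_pow]
    ring
  have hden0 : sin (2 * (π * n)) / 2 = 0 := by
    rw [show 2 * (π * n) = (2 * n : ℕ) * π by push_cast; ring, sin_nat_mul_pi, zero_div]
  have hsub : {s : ℝ | (∀ k : ℤ, s ≠ k) ∧ ∀ k : ℤ, s ≠ 1 / 2 + k} ⊆ {(n : ℝ)}ᶜ :=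
    fun s hs => by simpa using hs.1 n
  have hlim := (hnum.tendsto_div_of_eq_zero (hasDerivAt_sin_two_mul_pi_mul_div_two n) hnum0 hden0
    pi_ne_zero).mono_left (nhdsWithin_mono _ hsub)
  rw [one_div_mul_eq_div]
  refine hlim.congr' (eventually_nhdsWithin_of_forall fun s hs => ?_)
  beta_reduce
  rw [mul_assoc 2 π s]
  exact (one_div_sin_mul_add_two_mul_one_div_sin_two_mul (sin_pi_mul_ne_zero hs.1)
    (cos_pi_mul_ne_zero hs.2) _ _).symm
end

section
/- For all b > 0 and c ∈ (0,1), ∑_{n=1}^∞ ((√b c)^n / (n-1)!) (−1)^n J_{1/2 − n}(2√b) = −(b^{1/4} c / √(1-c)) · cos(2√b √(1-c)) / √π, where J_α is the Bessel function of the first kind. -/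
/-!
Expanding each `J_{-1/2-n}(z)` in its power series gives a double series in `(n, k)` that converges
absolutely, since `√π ≤ 4 ^ k * n! * |Γ(k + 1/2 - n)|`. Summing first over `n` is a binomial series,
`∑ₙ (-t)ⁿ / (n! Γ(k + 1/2 - n)) = (1 - t) ^ (k - 1/2) / Γ(k + 1/2)`, and this yields the
multiplication theorem `∑ₙ (-t z / 2)ⁿ / n! J_{-1/2-n}(z) = (1 - t) ^ (-1/4) J_{-1/2}(z √(1 - t))`.
Finally `J_{-1/2}(w) = √(2 / (π w)) cos w`, because the duplication formula turns
`k! Γ(k + 1/2)` into `(2k)! √π / 4 ^ k`.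
-/

open MeasureTheory Real Set

theorem Ring.choose_mul_factorial_eq_prod_range {R : Type*} [CommRing R] [BinomialRing R]
    (a : R) (n : ℕ) : Ring.choose a n * n.factorial = ∏ j ∈ Finset.range n, (a - j) := by
  rw [← descPochhammer_eval_eq_prod_range, descPochhammer_eval_eq_ascPochhammer,
    ← Polynomial.ascPochhammer_smeval_eq_eval, ← Polynomial.descPochhammer_smeval_eq_ascPochhammer,
    Ring.descPochhammer_eq_factorial_smul_choose, nsmul_eq_mul, mul_comm]

theorem Real.hasSum_choose_mul_pow {a t : ℝ} (ht : |t| < 1) :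
    HasSum (fun n : ℕ => Ring.choose a n * t ^ n) ((1 + t) ^ a) := by
  have h := (one_add_rpow_hasFPowerSeriesOnBall_zero (a := a)).hasSum (y := t)
    (by simpa [enorm_eq_nnnorm, ← NNReal.coe_lt_coe] using ht)
  simpa only [binomialSeries_apply, List.ofFn_const, List.prod_replicate, zero_add,
    smul_eq_mul] using h

theorem Real.Gamma_sub_nat_mul_prod_range {a : ℝ} (n : ℕ) (ha : ∀ j < n, a - j ≠ 0) :
    Gamma (a + 1 - n) * ∏ j ∈ Finset.range n, (a - j) = Gamma (a + 1) := by
  induction n with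
  | zero => simp
  | succ n ih =>
    rw [Finset.prod_range_succ, ← ih fun j hj => ha j (hj.trans n.lt_succ_self),
      show a + 1 - n = a - n + 1 by ring, Gamma_add_one (ha n n.lt_succ_self)]
    push_cast
    ring_nf

theorem Real.hasSum_pow_div_factorial_mul_Gamma {a t : ℝ} (ha : ∀ j : ℕ, a ≠ j) (ht : |t| < 1) :
    HasSum (fun n : ℕ => t ^ n / (n.factorial * Gamma (a + 1 - n)))
      ((1 + t) ^ a / Gamma (a + 1)) := by
  refine ((hasSum_choose_mul_pow ht).div_const _).congr_fun fun n => ?_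
  have hP : Ring.choose a n * n.factorial ≠ 0 := by
    rw [Ring.choose_mul_factorial_eq_prod_range]
    exact Finset.prod_ne_zero_iff.2 fun j _ => sub_ne_zero.2 (ha j)
  rw [← Gamma_sub_nat_mul_prod_range n fun j _ => sub_ne_zero.2 (ha j),
    ← Ring.choose_mul_factorial_eq_prod_range]
  field_simp
  rw [mul_div_mul_right _ _ (left_ne_zero_of_mul hP)]

theorem Real.Gamma_nat_add_half_mul_factorial (k : ℕ) :
    Gamma (k + 1 / 2) * k.factorial = (2 * k).factorial * √π / 4 ^ k := by
  have h := Gamma_mul_Gamma_add_half (k + 1 / 2)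
  rw [show (k : ℝ) + 1 / 2 + 1 / 2 = k + 1 by ring, Gamma_nat_eq_factorial,
    show 2 * ((k : ℝ) + 1 / 2) = ((2 * k : ℕ) : ℝ) + 1 by push_cast; ring, Gamma_nat_eq_factorial,
    show (1 : ℝ) - (((2 * k : ℕ) : ℝ) + 1) = -((2 * k : ℕ) : ℝ) by ring, rpow_neg zero_le_two,
    rpow_natCast, pow_mul] at h
  rw [h]
  norm_num
  ring

theorem Real.sqrt_pi_le_four_pow_mul_Gamma_nat_add_half (m : ℕ) :
    √π ≤ 4 ^ m * Gamma (m + 1 / 2) := by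
  have h := Gamma_nat_add_half_mul_factorial m
  have hm : (0 : ℝ) < m.factorial := by positivity
  have h2m : (m.factorial : ℝ) ≤ (2 * m).factorial := by
    exact_mod_cast Nat.factorial_le (by omega)
  rw [← mul_le_mul_iff_of_pos_right hm, mul_assoc, h, mul_div_cancel₀ _ (by positivity), mul_comm]
  exact mul_le_mul_of_nonneg_right h2m (sqrt_nonneg _)

theorem Real.sqrt_pi_le_factorial_mul_abs_Gamma_half_sub_nat (j : ℕ) :
    √π ≤ j.factorial * |Gamma (1 / 2 - j)| := by
  have h := Gamma_sub_nat_mul_prod_range (a := -(1 / 2)) j fun i _ => by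
    linarith [i.cast_nonneg (α := ℝ)]
  rw [show -(1 / 2 : ℝ) + 1 = 1 / 2 by norm_num, Gamma_one_half_eq] at h
  have hP : |∏ i ∈ Finset.range j, (-(1 / 2 : ℝ) - i)| ≤ j.factorial := by
    rw [Finset.abs_prod, ← Finset.prod_range_add_one_eq_factorial]
    push_cast
    exact Finset.prod_le_prod (fun _ _ => abs_nonneg _) fun i _ => by
      rw [abs_of_neg (by linarith [i.cast_nonneg (α := ℝ)])]; linarith
  calc √π = |Gamma (1 / 2 - j)| * |∏ i ∈ Finset.range j, (-(1 / 2 : ℝ) - i)| := by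
        rw [← abs_mul, h, abs_of_nonneg (sqrt_nonneg _)]
    _ ≤ _ := by rw [mul_comm]; exact mul_le_mul_of_nonneg_right hP (abs_nonneg _)

theorem Real.sqrt_pi_le_four_pow_mul_factorial_mul_abs_Gamma (n k : ℕ) :
    √π ≤ 4 ^ k * n.factorial * |Gamma (k + 1 / 2 - n)| := by
  have h4 : (1 : ℝ) ≤ 4 ^ k := one_le_pow₀ (by norm_num)
  rcases le_or_gt n k with hnk | hkn
  · obtain ⟨m, rfl⟩ := Nat.exists_eq_add_of_le hnk
    have hG : 0 < Gamma (m + 1 / 2) := Gamma_pos_of_pos (by positivity)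
    have hn : (1 : ℝ) ≤ n.factorial := by exact_mod_cast n.factorial_pos
    have h4m : (4 : ℝ) ^ m ≤ 4 ^ (n + m) := pow_le_pow_right₀ (by norm_num) (by omega)
    rw [show ((n + m : ℕ) : ℝ) + 1 / 2 - n = m + 1 / 2 by push_cast; ring, abs_of_pos hG]
    calc √π ≤ 4 ^ m * Gamma (m + 1 / 2) := sqrt_pi_le_four_pow_mul_Gamma_nat_add_half m
      _ ≤ 4 ^ (n + m) * n.factorial * Gamma (m + 1 / 2) := by gcongr; nlinarith
  · obtain ⟨j, rfl⟩ := Nat.exists_eq_add_of_lt hkn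
    have hj : ((j + 1).factorial : ℝ) ≤ (k + j + 1).factorial := by
      exact_mod_cast Nat.factorial_le (by omega)
    rw [show (k : ℝ) + 1 / 2 - ((k + j + 1 : ℕ) : ℝ) = 1 / 2 - ((j + 1 : ℕ) : ℝ) by push_cast; ring]
    calc √π ≤ (j + 1).factorial * |Gamma (1 / 2 - ((j + 1 : ℕ) : ℝ))| :=
          sqrt_pi_le_factorial_mul_abs_Gamma_half_sub_nat (j + 1)
      _ ≤ 4 ^ k * (k + j + 1).factorial * |Gamma (1 / 2 - ((j + 1 : ℕ) : ℝ))| := by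
          gcongr; nlinarith

theorem besselJ_neg_half {w : ℝ} (hw : 0 < w) : besselJ (-1 / 2) w = √(2 / (π * w)) * cos w := by
  have hw2 : 0 < w / 2 := by positivity
  have hconst : (w / 2) ^ (-1 / 2 : ℝ) / √π = √(2 / (π * w)) := by
    rw [neg_div, rpow_neg hw2.le, ← sqrt_eq_rpow, sqrt_div' _ (mul_pos pi_pos hw).le,
      sqrt_mul pi_pos.le, sqrt_div hw.le]
    field_simp
  rw [besselJ, cos_eq_tsum, ← hconst, ← tsum_mul_left]
  congr 1 with k
  have hk := Gamma_nat_add_half_mul_factorial k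
  rw [show (k : ℝ) + -1 / 2 + 1 = k + 1 / 2 by ring,
    show 2 * (k : ℝ) + -1 / 2 = ((2 * k : ℕ) : ℝ) + -1 / 2 by push_cast; ring, rpow_add hw2,
    rpow_natCast, mul_comm (k.factorial : ℝ), hk, pow_mul, pow_mul]
  field_simp
  rw [← mul_pow]
  ring

/-- The `(n, k)` term of the double series obtained by expanding
`(-t z / 2) ^ n / n! * J_{-1/2-n}(z)` in powers of `z / 2`. -/
noncomputable def besselJMulTerm (z t : ℝ) (n k : ℕ) : ℝ :=
  (z / 2) ^ (-1 / 2 : ℝ) * ((-1) ^ k * (z / 2) ^ (2 * k) / k.factorial) *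
    ((-t) ^ n / (n.factorial * Gamma (k + 1 / 2 - n)))

section
variable {z t : ℝ}

theorem summable_besselJMulTerm (ht : |t| < 1) :
    Summable (Function.uncurry (besselJMulTerm z t)) := by
  have hπ : 0 < √π := sqrt_pos.2 pi_pos
  refine Summable.of_norm_bounded (((summable_geometric_of_lt_one (abs_nonneg t) ht).mul_of_nonneg
    (summable_pow_div_factorial (z ^ 2)) (fun _ => by positivity) (fun _ => by positivity)).mul_left
    (|(z / 2) ^ (-1 / 2 : ℝ)| / √π)) fun ⟨n, k⟩ => ?_
  have hb := sqrt_pi_le_four_pow_mul_factorial_mul_abs_Gamma n k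
  have hΓ : 0 < |Gamma (k + 1 / 2 - n)| := pos_of_mul_pos_right (hπ.trans_le hb) (by positivity)
  simp only [Function.uncurry_apply_pair, besselJMulTerm, norm_mul, norm_div, norm_pow, norm_neg,
    norm_one, one_pow, one_mul, Real.norm_eq_abs, Nat.abs_cast]
  have key : |t| ^ n / (n.factorial * |Gamma (k + 1 / 2 - n)|) ≤ 4 ^ k * |t| ^ n / √π := by
    rw [div_le_div_iff₀ (by positivity) hπ]
    nlinarith [mul_le_mul_of_nonneg_left hb (pow_nonneg (abs_nonneg t) n)]
  have hz4 : (|z| / |2|) ^ (2 * k) * 4 ^ k = (z ^ 2) ^ k := by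
    rw [pow_mul, div_pow, sq_abs, ← mul_pow]
    norm_num
  calc _ ≤ |(z / 2) ^ (-1 / 2 : ℝ)| * ((|z| / |2|) ^ (2 * k) / k.factorial) *
        (4 ^ k * |t| ^ n / √π) := by gcongr
    _ = _ := by
        rw [← hz4]
        ring

theorem tsum_besselJMulTerm_row (hz : 0 < z) (n : ℕ) :
    ∑' k, besselJMulTerm z t n k = (-t * z / 2) ^ n / n.factorial * besselJ (-1 / 2 - n) z := by
  have hz2 : 0 < z / 2 := by positivity
  rw [besselJ, ← tsum_mul_left]
  congr 1 with k
  rw [show 2 * (k : ℝ) + (-1 / 2 - n) = ((2 * k : ℕ) : ℝ) + -1 / 2 - (n : ℕ) by push_cast; ring,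
    rpow_sub hz2, rpow_add hz2, rpow_natCast, rpow_natCast, show -t * z / 2 = -t * (z / 2) by ring,
    mul_pow, besselJMulTerm, show (k : ℝ) + (-1 / 2 - n) + 1 = k + 1 / 2 - n by ring]
  field_simp

theorem hasSum_besselJMulTerm_col (ht : |t| < 1) (k : ℕ) :
    HasSum (fun n => besselJMulTerm z t n k) ((z / 2) ^ (-1 / 2 : ℝ) *
      ((-1) ^ k * (z / 2) ^ (2 * k) / k.factorial) *
        ((1 - t) ^ ((k : ℝ) - 1 / 2) / Gamma (k + 1 / 2))) := by
  have ha : ∀ j : ℕ, (k : ℝ) - 1 / 2 ≠ j := fun j h => by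
    have : (2 * k : ℤ) = 2 * j + 1 := by exact_mod_cast (by linarith : (2 * k : ℝ) = 2 * j + 1)
    omega
  have h := (hasSum_pow_div_factorial_mul_Gamma ha (t := -t) (by rwa [abs_neg])).mul_left
    ((z / 2) ^ (-1 / 2 : ℝ) * ((-1) ^ k * (z / 2) ^ (2 * k) / k.factorial))
  rw [show (1 : ℝ) - t = 1 + -t by ring, show (k : ℝ) + 1 / 2 = k - 1 / 2 + 1 by ring]
  refine h.congr_fun fun n => ?_
  rw [besselJMulTerm]
  ring_nf

theorem rpow_mul_besselJ_neg_half_eq_tsum (hz : 0 < z) (ht : t < 1) :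
    (1 - t) ^ (-1 / 4 : ℝ) * besselJ (-1 / 2) (z * √(1 - t)) = ∑' k : ℕ, (z / 2) ^ (-1 / 2 : ℝ) *
      ((-1) ^ k * (z / 2) ^ (2 * k) / k.factorial) *
        ((1 - t) ^ ((k : ℝ) - 1 / 2) / Gamma (k + 1 / 2)) := by
  have hz2 : 0 < z / 2 := by positivity
  have ht' : 0 < 1 - t := by linarith
  rw [besselJ, ← tsum_mul_left]
  congr 1 with k
  rw [show z * √(1 - t) / 2 = z / 2 * √(1 - t) by ring, mul_rpow hz2.le (sqrt_nonneg _),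
    show 2 * (k : ℝ) + -1 / 2 = ((2 * k : ℕ) : ℝ) + -1 / 2 by push_cast; ring, rpow_add hz2,
    rpow_natCast, sqrt_eq_rpow, ← rpow_mul ht'.le, show (k : ℝ) + -1 / 2 + 1 = k + 1 / 2 by ring,
    show (k : ℝ) - 1 / 2 = -1 / 4 + 1 / 2 * (((2 * k : ℕ) : ℝ) + -1 / 2) by push_cast; ring,
    rpow_add ht']
  ring

theorem hasSum_besselJ_neg_half_sub_nat (hz : 0 < z) (ht : |t| < 1) :
    HasSum (fun n : ℕ => (-t * z / 2) ^ n / n.factorial * besselJ (-1 / 2 - n) z)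
      ((1 - t) ^ (-1 / 4 : ℝ) * besselJ (-1 / 2) (z * √(1 - t))) := by
  have hF := summable_besselJMulTerm (z := z) ht
  have hcols : ∑' k, ∑' n, besselJMulTerm z t n k =
      (1 - t) ^ (-1 / 4 : ℝ) * besselJ (-1 / 2) (z * √(1 - t)) := by
    rw [rpow_mul_besselJ_neg_half_eq_tsum hz (abs_lt.1 ht).2]
    exact tsum_congr fun k => (hasSum_besselJMulTerm_col ht k).tsum_eq
  simp only [← tsum_besselJMulTerm_row hz]
  rw [← hcols, hF.tsum_comm]
  exact hF.prod.hasSum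
end

theorem Real.sqrt_eq_rpow_quarter_sq {x : ℝ} (hx : 0 ≤ x) : √x = (x ^ (1 / 4 : ℝ)) ^ 2 := by
  rw [sqrt_eq_rpow, ← rpow_natCast, ← rpow_mul hx]
  norm_num

theorem sum_besselJ_eq_cos (b c : ℝ) (hb : 0 < b) (hc : c ∈ Set.Ioo (0:ℝ) 1) :
    ∑' n : ℕ,
        (Real.sqrt b * c) ^ (n + 1) / (n.factorial : ℝ) * (-1 : ℝ) ^ (n + 1) *
          besselJ (1 / 2 - ((n : ℝ) + 1)) (2 * Real.sqrt b)
      = -(b ^ ((1 : ℝ) / 4) * c / Real.sqrt (1 - c)) *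
          Real.cos (2 * Real.sqrt b * Real.sqrt (1 - c)) / Real.sqrt Real.pi := by
  obtain ⟨hc0, hc1⟩ := hc
  have h1c : 0 < 1 - c := by linarith
  have hsum := hasSum_besselJ_neg_half_sub_nat (z := 2 * √b) (by positivity)
    (abs_lt.2 ⟨by linarith, hc1⟩)
  have hterm (n : ℕ) : (√b * c) ^ (n + 1) / n.factorial * (-1) ^ (n + 1) *
      besselJ (1 / 2 - (n + 1)) (2 * √b)
        = -(√b * c) * ((-c * (2 * √b) / 2) ^ n / n.factorial * besselJ (-1 / 2 - n) (2 * √b)) := by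
    rw [show (1 : ℝ) / 2 - (n + 1) = -1 / 2 - n by ring]
    ring
  rw [tsum_congr hterm, tsum_mul_left, hsum.tsum_eq, besselJ_neg_half (by positivity),
    sqrt_eq_rpow_quarter_sq hb.le, sqrt_eq_rpow_quarter_sq h1c.le, neg_div, rpow_neg h1c.le]
  have hsq : √(2 / (π * (2 * (b ^ (1 / 4 : ℝ)) ^ 2 * ((1 - c) ^ (1 / 4 : ℝ)) ^ 2)))
      = 1 / (√π * b ^ (1 / 4 : ℝ) * (1 - c) ^ (1 / 4 : ℝ)) := by
    rw [← sqrt_sq (by positivity : 0 ≤ 1 / (√π * b ^ (1 / 4 : ℝ) * (1 - c) ^ (1 / 4 : ℝ))), div_pow,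
      mul_pow, mul_pow, sq_sqrt pi_pos.le]
    congr 1
    field_simp
  rw [hsq]
  field_simp
end
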